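/- For the block 3×3 complex Hermitian matrix 𝒳 = ![![X, θ], ![θᴴ, n]] with X a 2×2 Hermitian block, θ ∈ ℂ² a column, and n ∈ ℝ, one has det 𝒳 = (det X)·n + 2·X⋆(θθᴴ), where X⋆Y := ½(tr(X∘Y) − tr(X)·tr(Y)) and X∘Y = (XY+YX)/2. -/

import Mathlib

open Matrix

/-- The Jordan product on 2×2 complex matrices. -/
noncomputable def jmul (X Y : Matrix (Fin 2) (Fin 2) ℂ) : Matrix (Fin 2) (Fin 2) ℂ :=
  (1 / 2 : ℂ) • (X * Y + Y * X)

/-- The Lorentzian inner product of 2×2 Hermitian matrices. -/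
noncomputable def lprod (X Y : Matrix (Fin 2) (Fin 2) ℂ) : ℂ :=
  ((jmul X Y).trace - X.trace * Y.trace) / 2

/-!
Expanding the bordered determinant gives `det 𝒳 = n · det X - θᴴ (adj X) θ`, and for 2×2 matrices
`adj X = tr X · 1 - X`, so `θᴴ (adj X) θ = tr (adj X · θθᴴ) = tr X · tr (θθᴴ) - tr (X θθᴴ)`,
which is `-2 X⋆(θθᴴ)` because the Jordan product has the same trace as the ordinary one.
-/

namespace Matrix

variable {R : Type*} [CommRing R]

theorem det_fromBlocks_replicateCol_replicateRow_fin_two (A : Matrix (Fin 2) (Fin 2) R)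
    (u v : Fin 2 → R) (d : R) :
    (fromBlocks A (replicateCol (Fin 1) u) (replicateRow (Fin 1) v) (of fun _ _ => d)).det =
      d * A.det - v ⬝ᵥ (adjugate A *ᵥ u) := by
  rw [← det_reindex_self finSumFinEquiv, det_fin_three, adjugate_fin_two, det_fin_two]
  have h0 : (finSumFinEquiv (m := 2) (n := 1)).symm 0 = Sum.inl (0 : Fin 2) := rfl
  have h1 : (finSumFinEquiv (m := 2) (n := 1)).symm 1 = Sum.inl (1 : Fin 2) := rfl
  have h2 : (finSumFinEquiv (m := 2) (n := 1)).symm 2 = Sum.inr (0 : Fin 1) := rfl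
  simp only [reindex_apply, submatrix_apply, h0, h1, h2, fromBlocks_apply₁₁, fromBlocks_apply₁₂,
    fromBlocks_apply₂₁, fromBlocks_apply₂₂, replicateCol_apply, replicateRow_apply, of_apply,
    dotProduct, mulVec, Fin.sum_univ_two, cons_val_zero, cons_val_one, cons_val_fin_one]
  ring

theorem trace_adjugate_mul_fin_two (A B : Matrix (Fin 2) (Fin 2) R) :
    (adjugate A * B).trace = A.trace * B.trace - (A * B).trace := by
  simp only [adjugate_fin_two, trace_fin_two, mul_apply, Fin.sum_univ_two, of_apply, cons_val',
    cons_val_zero, cons_val_one, cons_val_fin_one]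
  ring

theorem trace_mul_vecMulVec {n : Type*} [Fintype n] (A : Matrix n n R) (u v : n → R) :
    (A * vecMulVec u v).trace = v ⬝ᵥ (A *ᵥ u) := by
  rw [mul_vecMulVec, trace_vecMulVec, dotProduct_comm]

end Matrix

theorem trace_jmul (X Y : Matrix (Fin 2) (Fin 2) ℂ) : (jmul X Y).trace = (X * Y).trace := by
  rw [jmul, trace_smul, trace_add, trace_mul_comm Y X]
  simp only [smul_eq_mul]
  ring

theorem two_mul_lprod (X Y : Matrix (Fin 2) (Fin 2) ℂ) :
    2 * lprod X Y = -(adjugate X * Y).trace := by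
  rw [lprod, trace_jmul, trace_adjugate_mul_fin_two]
  ring

theorem det_block_decomposition_general
    (X : Matrix (Fin 2) (Fin 2) ℂ) (θ : Fin 2 → ℂ) (n : ℝ) :
    (Matrix.fromBlocks X
        (Matrix.of fun i (_ : Fin 1) => θ i)
        (Matrix.of fun (_ : Fin 1) j => star (θ j))
        (Matrix.of fun (_ : Fin 1) (_ : Fin 1) => (n : ℂ))).det
      = X.det * n + 2 * lprod X (Matrix.of fun i j => θ i * star (θ j)) := by
  change (fromBlocks X (replicateCol (Fin 1) θ) (replicateRow (Fin 1) (star θ))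
      (of fun _ _ => (n : ℂ))).det = X.det * n + 2 * lprod X (vecMulVec θ (star θ))
  rw [det_fromBlocks_replicateCol_replicateRow_fin_two, two_mul_lprod, trace_mul_vecMulVec]
  ring

theorem det_block_decomposition
    (X : Matrix (Fin 2) (Fin 2) ℂ) (hX : X.IsHermitian) (θ : Fin 2 → ℂ) (n : ℝ) :
    (Matrix.fromBlocks X
        (Matrix.of fun i (_ : Fin 1) => θ i)
        (Matrix.of fun (_ : Fin 1) j => star (θ j))
        (Matrix.of fun (_ : Fin 1) (_ : Fin 1) => (n : ℂ))).det
      = X.det * n + 2 * lprod X (Matrix.of fun i j => θ i * star (θ j)) :=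
  det_block_decomposition_general X θ n
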